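/- Let λ ∈ ℝ and let u satisfy the second heavenly equation. Consider the vector fields A_t = (u_{xy} − λ) ∂_x − u_{xx} ∂_y, with coefficient pair (u_{xy} − λ, −u_{xx}), and A_z with coefficient pair (u_{yy}, −(u_{xy} + λ)). Then the zero-curvature conditions ∂_z(u_{xy} − λ) − ∂_t(u_{yy}) + (u_{xy} − λ)∂_x u_{yy} − u_{xx} ∂_y u_{yy} − u_{yy} ∂_x(u_{xy} − λ) + (u_{xy} + λ) ∂_y(u_{xy} − λ) = 0 and ∂_z(−u_{xx}) − ∂_t(−(u_{xy}+λ)) + (u_{xy} − λ)∂_x(−(u_{xy}+λ)) − u_{xx}∂_y(−(u_{xy}+λ)) − u_{yy}∂_x(−u_{xx}) + (u_{xy}+λ)∂_y(−u_{xx}) = 0 both hold identically. -/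

import Mathlib

noncomputable def pd (i : Fin 4) (f : (Fin 4 → ℝ) → ℝ) (x : Fin 4 → ℝ) : ℝ :=
  deriv (fun s => f (Function.update x i s)) (x i)

/-- `F = u_{xz} - u_{ty} - u_{xx} u_{yy} + u_{xy}^2` (coords: 0=t, 1=x, 2=y, 3=z). -/
noncomputable def heavenlyF (u : (Fin 4 → ℝ) → ℝ) (x : Fin 4 → ℝ) : ℝ :=
  pd 1 (pd 3 u) x - pd 0 (pd 2 u) x
    - pd 1 (pd 1 u) x * pd 2 (pd 2 u) x + (pd 1 (pd 2 u) x) ^ 2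

/-- Lax operator `L₁ = ∂_t - (u_{xy} - λ) ∂_x + u_{xx} ∂_y`. -/
noncomputable def laxL1 (u : (Fin 4 → ℝ) → ℝ) (lam : ℝ) (f : (Fin 4 → ℝ) → ℝ)
    (x : Fin 4 → ℝ) : ℝ :=
  pd 0 f x - (pd 1 (pd 2 u) x - lam) * pd 1 f x + pd 1 (pd 1 u) x * pd 2 f x

/-- Lax operator `L₂ = ∂_z - u_{yy} ∂_x + (u_{xy} + λ) ∂_y`. -/
noncomputable def laxL2 (u : (Fin 4 → ℝ) → ℝ) (lam : ℝ) (f : (Fin 4 → ℝ) → ℝ)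
    (x : Fin 4 → ℝ) : ℝ :=
  pd 3 f x - pd 2 (pd 2 u) x * pd 1 f x + (pd 1 (pd 2 u) x + lam) * pd 2 f x

lemma pd_hasDerivAt {f : (Fin 4 → ℝ) → ℝ} {x : Fin 4 → ℝ} (i : Fin 4)
    (hf : DifferentiableAt ℝ f x) :
    HasDerivAt (fun s => f (Function.update x i s)) (fderiv ℝ f x (Pi.single i 1)) (x i) := by
  have h2 : HasFDerivAt f (fderiv ℝ f x) (Function.update x i (x i)) := by
    rw [Function.update_eq_self]; exact hf.hasFDerivAt
  exact h2.comp_hasDerivAt (x i) (hasDerivAt_update x i (x i))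

lemma pd_eq {f : (Fin 4 → ℝ) → ℝ} {x : Fin 4 → ℝ} (i : Fin 4)
    (hf : DifferentiableAt ℝ f x) :
    pd i f x = fderiv ℝ f x (Pi.single i 1) := (pd_hasDerivAt i hf).deriv

lemma pd_hasDerivAt' {f : (Fin 4 → ℝ) → ℝ} {x : Fin 4 → ℝ} (i : Fin 4)
    (hf : DifferentiableAt ℝ f x) :
    HasDerivAt (fun s => f (Function.update x i s)) (pd i f x) (x i) := by
  rw [pd_eq i hf]; exact pd_hasDerivAt i hf

lemma pd_eq_fun (f : (Fin 4 → ℝ) → ℝ) (i : Fin 4) (hf : ContDiff ℝ (⊤ : ℕ∞) f) :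
    pd i f = fun x => fderiv ℝ f x (Pi.single i 1) :=
  funext fun x => pd_eq i (hf.differentiable (by simp) x)

lemma pd_contDiff {f : (Fin 4 → ℝ) → ℝ} (i : Fin 4) (hf : ContDiff ℝ (⊤ : ℕ∞) f) :
    ContDiff ℝ (⊤ : ℕ∞) (pd i f) := by
  rw [pd_eq_fun f i hf]
  exact (hf.fderiv_right (by simp)).clm_apply contDiff_const

lemma pd_comm (i j : Fin 4) (f : (Fin 4 → ℝ) → ℝ) (hf : ContDiff ℝ (⊤ : ℕ∞) f) :
    pd i (pd j f) = pd j (pd i f) := by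
  have hd : Differentiable ℝ f := hf.differentiable (by simp)
  have hf' : ContDiff ℝ (⊤ : ℕ∞) (fderiv ℝ f) := hf.fderiv_right (by simp)
  have key : ∀ (x : Fin 4 → ℝ) (a b : Fin 4),
      pd a (pd b f) x = fderiv ℝ (fderiv ℝ f) x (Pi.single a 1) (Pi.single b 1) := by
    intro x a b
    rw [pd_eq a ((pd_contDiff b hf).differentiable (by simp) x), pd_eq_fun f b hf]
    rw [fderiv_clm_apply (hf'.differentiable (by simp) x) (differentiableAt_const _)]
    simp
  funext x
  rw [key x i j, key x j i]
  exact second_derivative_symmetric (fun y => (hd y).hasFDerivAt)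
    ((hf'.differentiable (by simp) x).hasFDerivAt) _ _

lemma pd_sub_const {f : (Fin 4 → ℝ) → ℝ} {x : Fin 4 → ℝ} (i : Fin 4) (c : ℝ)
    (hf : DifferentiableAt ℝ f x) :
    pd i (fun y => f y - c) x = pd i f x :=
  ((pd_hasDerivAt' i hf).sub_const c).deriv

lemma pd_neg {f : (Fin 4 → ℝ) → ℝ} {x : Fin 4 → ℝ} (i : Fin 4)
    (hf : DifferentiableAt ℝ f x) :
    pd i (fun y => -f y) x = -pd i f x :=
  (pd_hasDerivAt' i hf).neg.deriv

lemma pd_neg_add_const {f : (Fin 4 → ℝ) → ℝ} {x : Fin 4 → ℝ} (i : Fin 4) (c : ℝ)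
    (hf : DifferentiableAt ℝ f x) :
    pd i (fun y => -(f y + c)) x = -pd i f x := by
  have h := ((pd_hasDerivAt' i hf).add_const c).neg.deriv
  exact h

theorem stmt10 (u : (Fin 4 → ℝ) → ℝ) (lam : ℝ) (hu : ContDiff ℝ (⊤ : ℕ∞) u)
    (hheav : ∀ x, heavenlyF u x = 0) :
    (∀ x, pd 3 (fun y => pd 1 (pd 2 u) y - lam) x - pd 0 (pd 2 (pd 2 u)) x
        + (pd 1 (pd 2 u) x - lam) * pd 1 (pd 2 (pd 2 u)) x
        - pd 1 (pd 1 u) x * pd 2 (pd 2 (pd 2 u)) x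
        - pd 2 (pd 2 u) x * pd 1 (fun y => pd 1 (pd 2 u) y - lam) x
        + (pd 1 (pd 2 u) x + lam) * pd 2 (fun y => pd 1 (pd 2 u) y - lam) x = 0) ∧
    (∀ x, pd 3 (fun y => -pd 1 (pd 1 u) y) x
        - pd 0 (fun y => -(pd 1 (pd 2 u) y + lam)) x
        + (pd 1 (pd 2 u) x - lam) * pd 1 (fun y => -(pd 1 (pd 2 u) y + lam)) x
        - pd 1 (pd 1 u) x * pd 2 (fun y => -(pd 1 (pd 2 u) y + lam)) x
        - pd 2 (pd 2 u) x * pd 1 (fun y => -pd 1 (pd 1 u) y) x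
        + (pd 1 (pd 2 u) x + lam) * pd 2 (fun y => -pd 1 (pd 1 u) y) x = 0) := by
  have hzero : heavenlyF u = fun _ => 0 := funext hheav
  have d : ∀ (a b : Fin 4) (x : Fin 4 → ℝ), DifferentiableAt ℝ (pd a (pd b u)) x :=
    fun a b x => ((pd_contDiff a (pd_contDiff b hu)).differentiable (by simp)) x
  -- derivatives of heavenlyF in directions 1 and 2 vanish
  have hF : ∀ (i : Fin 4) (x : Fin 4 → ℝ),
      pd i (pd 1 (pd 3 u)) x - pd i (pd 0 (pd 2 u)) x
        - (pd i (pd 1 (pd 1 u)) x * pd 2 (pd 2 u) x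
            + pd 1 (pd 1 u) x * pd i (pd 2 (pd 2 u)) x)
        + (2 : ℕ) * pd 1 (pd 2 u) x ^ (2 - 1) * pd i (pd 1 (pd 2 u)) x = 0 := by
    intro i x
    have H := ((((pd_hasDerivAt' i (d 1 3 x)).sub (pd_hasDerivAt' i (d 0 2 x))).sub
        ((pd_hasDerivAt' i (d 1 1 x)).mul (pd_hasDerivAt' i (d 2 2 x)))).add
        ((pd_hasDerivAt' i (d 1 2 x)).pow 2))
    simp only [Function.update_eq_self] at H
    have h1 : pd i (heavenlyF u) x = _ := H.deriv
    have h2 : pd i (heavenlyF u) x = 0 := by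
      rw [hzero]; unfold pd; simp
    rw [h2] at h1
    linarith [h1]
  constructor
  · intro x
    have hD := hF 2 x
    norm_num at hD
    rw [pd_sub_const 3 lam (d 1 2 x), pd_sub_const 1 lam (d 1 2 x),
      pd_sub_const 2 lam (d 1 2 x)]
    have E1 : pd 3 (pd 1 (pd 2 u)) x = pd 2 (pd 1 (pd 3 u)) x := by
      rw [pd_comm 3 1 _ (pd_contDiff 2 hu), pd_comm 3 2 u hu,
        pd_comm 1 2 _ (pd_contDiff 3 hu)]
    have E2 : pd 0 (pd 2 (pd 2 u)) x = pd 2 (pd 0 (pd 2 u)) x := by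
      rw [pd_comm 0 2 _ (pd_contDiff 2 hu)]
    have E3 : pd 1 (pd 2 (pd 2 u)) x = pd 2 (pd 1 (pd 2 u)) x := by
      rw [pd_comm 1 2 _ (pd_contDiff 2 hu)]
    have E4 : pd 1 (pd 1 (pd 2 u)) x = pd 2 (pd 1 (pd 1 u)) x := by
      rw [pd_comm 1 2 u hu, pd_comm 1 2 _ (pd_contDiff 1 hu)]
    rw [E1, E2, E3, E4]
    linear_combination hD
  · intro x
    have hD := hF 1 x
    norm_num at hD
    rw [pd_neg 3 (d 1 1 x), pd_neg 1 (d 1 1 x), pd_neg 2 (d 1 1 x),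
      pd_neg_add_const 0 lam (d 1 2 x), pd_neg_add_const 1 lam (d 1 2 x),
      pd_neg_add_const 2 lam (d 1 2 x)]
    have E1 : pd 3 (pd 1 (pd 1 u)) x = pd 1 (pd 1 (pd 3 u)) x := by
      rw [pd_comm 3 1 _ (pd_contDiff 1 hu), pd_comm 3 1 u hu]
    have E2 : pd 0 (pd 1 (pd 2 u)) x = pd 1 (pd 0 (pd 2 u)) x := by
      rw [pd_comm 0 1 _ (pd_contDiff 2 hu)]
    have E3 : pd 2 (pd 1 (pd 2 u)) x = pd 1 (pd 2 (pd 2 u)) x := by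
      rw [pd_comm 2 1 _ (pd_contDiff 2 hu)]
    have E4 : pd 2 (pd 1 (pd 1 u)) x = pd 1 (pd 1 (pd 2 u)) x := by
      rw [pd_comm 2 1 _ (pd_contDiff 1 hu), pd_comm 2 1 u hu]
    rw [E1, E2, E3, E4]
    linear_combination -hD
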